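/- Let C be a free cyclic code of odd length n over R = Z4[u]/(u^2) with idempotent generator e(x) in R[x]/(x^n - 1). Then 1 - e(x^{-1}) (i.e., the idempotent obtained by substituting x^{n-1} for x and subtracting from 1) is an idempotent generator of the dual code C^⊥. -/

import Mathlib

set_option maxSynthPendingDepth 3
set_option synthInstance.maxHeartbeats 400000

open DualNumber TrivSqZeroExt Polynomial

/-- The ring `R = ℤ₄[u]/(u²)`, realized as dual numbers over `ℤ₄`. -/
abbrev R4 := DualNumber (ZMod 4)

/-- The polynomial `c₀ + c₁ x + ⋯ + c_{n-1} x^{n-1}` of a word `c ∈ Rⁿ`. -/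
noncomputable def toPoly {n : ℕ} (c : Fin n → R4) : Polynomial R4 :=
  ∑ i : Fin n, C (c i) * X ^ (i : ℕ)

/-- The set of words of length `n` whose polynomial lies in the ideal `I` of
`R[x]/(xⁿ-1)`. -/
def codeOfIdeal {n : ℕ}
    (I : Ideal (Polynomial R4 ⧸ Ideal.span {(X : Polynomial R4) ^ n - 1})) :
    Set (Fin n → R4) :=
  {c | Ideal.Quotient.mk (Ideal.span {(X : Polynomial R4) ^ n - 1}) (toPoly c) ∈ I}

/-- The dual of a code under the Euclidean inner product on `Rⁿ`. -/
def dualCode {n : ℕ} (S : Set (Fin n → R4)) : Set (Fin n → R4) :=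
  {y | ∀ c ∈ S, ∑ i : Fin n, c i * y i = 0}

/-!
Write `σ` (`compInv`) for the automorphism `p(x) ↦ p(x⁻¹) = p(x^{n-1})` of `A[x]/(xⁿ - 1)`
and `τ` (`coeffZero`) for the coefficient of `1` in the basis `1, x, …, x^{n-1}`. For words
`c, y` the Euclidean product `∑ cᵢ yᵢ` equals `τ(c · σ(y))`, and `τ(w · z) = 0` for all `w`
forces `z = 0`. Hence `y` is orthogonal to the ideal `(e)` iff `e · σ(y) = 0`, i.e. (applying
the involution `σ`) iff `σ(e) · y = 0`, which for the idempotent `σ(e)` says exactly that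
`y ∈ (1 - σ(e))`.
-/

theorem pow_pred_pow_pred_of_pow_eq_one {M : Type*} [CommMonoid M] {x : M} {n : ℕ}
    (hn : n ≠ 0) (hx : x ^ n = 1) : (x ^ (n - 1)) ^ (n - 1) = x := by
  have hn' : n - 1 + 1 = n := Nat.sub_add_cancel (Nat.one_le_iff_ne_zero.2 hn)
  calc (x ^ (n - 1)) ^ (n - 1) = (x ^ (n - 1)) ^ (n - 1) * (x ^ (n - 1) * x) := by
        rw [← pow_succ, hn', hx, mul_one]
    _ = (x ^ n) ^ (n - 1) * x := by
        rw [← mul_assoc, ← pow_succ, hn', ← pow_mul, ← pow_mul, mul_comm n]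
    _ = x := by rw [hx, one_pow, one_mul]

theorem Nat.dvd_add_pred_mul_iff {n i j : ℕ} (hi : i < n) (hj : j < n) :
    n ∣ i + (n - 1) * j ↔ i = j := by
  rw [← ZMod.natCast_eq_zero_iff]
  push_cast [Nat.cast_sub (Nat.one_le_of_lt hi), ZMod.natCast_self]
  rw [zero_sub, neg_one_mul, ← sub_eq_add_neg, sub_eq_zero, ZMod.natCast_eq_natCast_iff',
    Nat.mod_eq_of_lt hi, Nat.mod_eq_of_lt hj]

theorem IsIdempotentElem.mem_span_one_sub_iff {R : Type*} [CommRing R] {e x : R}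
    (he : IsIdempotentElem e) : x ∈ Ideal.span {1 - e} ↔ x * e = 0 := by
  rw [← he.ker_toSpanSingleton_eq_span, LinearMap.mem_ker, LinearMap.toSpanSingleton_apply,
    smul_eq_mul]

namespace CyclicCode

variable (A : Type*) [CommRing A] (n : ℕ)

local notation "𝓠" => A[X] ⧸ Ideal.span {(X : A[X]) ^ n - 1}
local notation "π" => Ideal.Quotient.mk (Ideal.span {(X : A[X]) ^ n - 1})

theorem mk_X_pow_self : π X ^ n = 1 := by
  rw [← map_pow, ← map_one π, Ideal.Quotient.eq]
  exact Ideal.subset_span rfl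

theorem mk_X_pow_mod (m : ℕ) : π X ^ m = π X ^ (m % n) := by
  conv_lhs => rw [← Nat.div_add_mod m n, pow_add, pow_mul, mk_X_pow_self, one_pow, one_mul]

noncomputable def compInv : 𝓠 →ₐ[A] 𝓠 :=
  Ideal.Quotient.liftₐ _ (aeval (π X ^ (n - 1))) fun p hp => by
    obtain ⟨q, rfl⟩ := Ideal.mem_span_singleton'.1 hp
    simp [← pow_mul', pow_mul, mk_X_pow_self]

variable {A n}

theorem compInv_mk (p : A[X]) : compInv A n (π p) = π (p.comp (X ^ (n - 1))) := by
  change aeval (π X ^ (n - 1)) p = _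
  rw [comp_eq_aeval, ← Ideal.Quotient.mkₐ_eq_mk A, ← map_pow, aeval_algHom_apply]

theorem compInv_mk_X : compInv A n (π X) = π X ^ (n - 1) := by
  rw [compInv_mk, X_comp, map_pow]

variable [NeZero n]

theorem compInv_compInv (z : 𝓠) : compInv A n (compInv A n z) = z := by
  suffices (compInv A n).comp (compInv A n) = AlgHom.id A 𝓠 from AlgHom.congr_fun this z
  refine Ideal.Quotient.algHom_ext A (Polynomial.algHom_ext ?_)
  simp only [AlgHom.comp_apply, Ideal.Quotient.mkₐ_eq_mk, AlgHom.id_apply, compInv_mk_X, map_pow]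
  exact pow_pred_pow_pred_of_pow_eq_one (NeZero.ne n) (mk_X_pow_self A n)

variable (A n) [Nontrivial A]

noncomputable def basis : Module.Basis (Fin n) A 𝓠 :=
  (AdjoinRoot.powerBasis' (by simpa using monic_X_pow_sub_C (1 : A) (NeZero.ne n))).basis.reindex
    (finCongr (by simpa using natDegree_X_pow_sub_C (n := n) (r := (1 : A))))

variable {A n}

theorem basis_apply (i : Fin n) : basis A n i = π X ^ (i : ℕ) := by
  rw [basis]
  -- `AdjoinRoot g` is `A[X] ⧸ span {g}` only up to unfolding, hence `erw`
  erw [Module.Basis.reindex_apply, PowerBasis.coe_basis]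
  rfl

theorem basis_equivFun_symm_apply (c : Fin n → A) :
    (basis A n).equivFun.symm c = ∑ i, c i • π X ^ (i : ℕ) := by
  simp only [Module.Basis.equivFun_symm_apply, basis_apply]

theorem mk_sum_C_mul_X_pow (c : Fin n → A) :
    π (∑ i, C (c i) * X ^ (i : ℕ)) = (basis A n).equivFun.symm c := by
  simp only [basis_equivFun_symm_apply, map_sum, map_mul, map_pow, Algebra.smul_def,
    ← Polynomial.algebraMap_eq, Ideal.Quotient.mk_algebraMap]

variable (A n)

noncomputable def coeffZero : 𝓠 →ₗ[A] A := (basis A n).coord 0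

variable {A n}

theorem coeffZero_mk_X_pow (m : ℕ) : coeffZero A n (π X ^ m) = if n ∣ m then 1 else 0 := by
  have hlt : m % n < n := Nat.mod_lt _ (Nat.pos_of_ne_zero (NeZero.ne n))
  rw [mk_X_pow_mod, ← basis_apply ⟨m % n, hlt⟩, coeffZero, Module.Basis.coord_apply,
    Module.Basis.repr_self, Finsupp.single_apply]
  simp only [Fin.ext_iff, Fin.val_zero, Nat.dvd_iff_mod_eq_zero]

theorem coeffZero_mul_compInv (c y : Fin n → A) :
    coeffZero A n ((basis A n).equivFun.symm c * compInv A n ((basis A n).equivFun.symm y)) =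
      ∑ i, c i * y i := by
  simp only [basis_equivFun_symm_apply, map_sum, map_smul, map_pow, compInv_mk_X,
    Finset.sum_mul_sum, smul_mul_smul_comm, ← pow_mul, ← pow_add, coeffZero_mk_X_pow,
    smul_eq_mul]
  refine Finset.sum_congr rfl fun i _ => ?_
  simp only [Nat.dvd_add_pred_mul_iff i.isLt (Fin.isLt _), Fin.val_inj, mul_ite, mul_one, mul_zero,
    Finset.sum_ite_eq, Finset.mem_univ, if_true]

theorem basis_equivFun_eq_coeffZero (z : 𝓠) (j : Fin n) :
    (basis A n).equivFun z j = coeffZero A n (z * compInv A n (π X ^ (j : ℕ))) := by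
  have h := coeffZero_mul_compInv ((basis A n).equivFun z) (Pi.single j 1)
  rw [LinearEquiv.symm_apply_apply, Basis.equivFun_symm_single, basis_apply] at h
  simpa [Pi.single_apply] using h.symm

theorem eq_zero_of_forall_coeffZero_mul_eq_zero {z : 𝓠} (h : ∀ w, coeffZero A n (w * z) = 0) :
    z = 0 :=
  (basis A n).equivFun.injective <| funext fun j => by
    rw [basis_equivFun_eq_coeffZero, mul_comm, h, map_zero, Pi.zero_apply]

theorem forall_mem_span_sum_mul_eq_zero_iff {E : 𝓠} (hE : IsIdempotentElem E) (y : Fin n → A) :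
    (∀ c, (basis A n).equivFun.symm c ∈ Ideal.span {E} → ∑ i, c i * y i = 0) ↔
      (basis A n).equivFun.symm y ∈ Ideal.span {1 - compInv A n E} := by
  set v := (basis A n).equivFun.symm y
  rw [(hE.map (compInv A n)).mem_span_one_sub_iff]
  calc (∀ c, (basis A n).equivFun.symm c ∈ Ideal.span {E} → ∑ i, c i * y i = 0)
      ↔ ∀ z ∈ Ideal.span {E}, coeffZero A n (z * compInv A n v) = 0 := by
        simp only [← coeffZero_mul_compInv]
        exact ((basis A n).equivFun.symm.surjective.forall
          (p := fun z => z ∈ Ideal.span {E} → coeffZero A n (z * compInv A n v) = 0)).symm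
    _ ↔ ∀ w, coeffZero A n (w * (E * compInv A n v)) = 0 := by
        simp only [Ideal.mem_span_singleton', forall_exists_index, forall_apply_eq_imp_iff,
          mul_assoc]
    _ ↔ E * compInv A n v = 0 :=
        ⟨eq_zero_of_forall_coeffZero_mul_eq_zero, fun h w => by rw [h, mul_zero, map_zero]⟩
    _ ↔ v * compInv A n E = 0 := by
        rw [← map_eq_zero_iff _ (Function.LeftInverse.injective compInv_compInv), map_mul,
          compInv_compInv, mul_comm]

end CyclicCode

theorem stmt19_general (n : ℕ) [NeZero n] (e : Polynomial R4)
    (hidem : (Ideal.Quotient.mk (Ideal.span {(X : Polynomial R4) ^ n - 1}) e) ^ 2 =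
      Ideal.Quotient.mk (Ideal.span {(X : Polynomial R4) ^ n - 1}) e) :
    ((1 : Polynomial R4 ⧸ Ideal.span {(X : Polynomial R4) ^ n - 1}) -
        Ideal.Quotient.mk (Ideal.span {(X : Polynomial R4) ^ n - 1}) (e.comp (X ^ (n - 1)))) ^ 2 =
      (1 : Polynomial R4 ⧸ Ideal.span {(X : Polynomial R4) ^ n - 1}) -
        Ideal.Quotient.mk (Ideal.span {(X : Polynomial R4) ^ n - 1}) (e.comp (X ^ (n - 1))) ∧
    codeOfIdeal (Ideal.span
        {(1 : Polynomial R4 ⧸ Ideal.span {(X : Polynomial R4) ^ n - 1}) -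
          Ideal.Quotient.mk (Ideal.span {(X : Polynomial R4) ^ n - 1}) (e.comp (X ^ (n - 1)))}) =
      dualCode (codeOfIdeal (Ideal.span
        {Ideal.Quotient.mk (Ideal.span {(X : Polynomial R4) ^ n - 1}) e})) := by
  have : Fact (1 < 4) := ⟨by norm_num⟩
  have hE : IsIdempotentElem (Ideal.Quotient.mk (Ideal.span {(X : R4[X]) ^ n - 1}) e) := by
    rw [IsIdempotentElem, ← sq, hidem]
  rw [← CyclicCode.compInv_mk]
  refine ⟨(hE.map (CyclicCode.compInv R4 n)).one_sub.pow_eq two_ne_zero, Set.ext fun y => ?_⟩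
  simp only [codeOfIdeal, dualCode, Set.mem_ofPred_eq, toPoly, CyclicCode.mk_sum_C_mul_X_pow]
  exact (CyclicCode.forall_mem_span_sum_mul_eq_zero_iff hE y).symm

/-- If `C` is a free cyclic code of odd length `n` over `R = ℤ₄[u]/(u²)` with
idempotent generator `e(x)`, then `1 - e(x⁻¹)` (where `x⁻¹ = x^{n-1}` modulo
`xⁿ - 1`) is an idempotent generator of the dual code `C^⊥`. -/
theorem stmt19 (n : ℕ) [NeZero n] (hodd : Odd n) (e : Polynomial R4)
    (hidem : (Ideal.Quotient.mk (Ideal.span {(X : Polynomial R4) ^ n - 1}) e) ^ 2 =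
      Ideal.Quotient.mk (Ideal.span {(X : Polynomial R4) ^ n - 1}) e)
    (hfree : Module.Free R4
      (Ideal.span {Ideal.Quotient.mk (Ideal.span {(X : Polynomial R4) ^ n - 1}) e})) :
    ((1 : Polynomial R4 ⧸ Ideal.span {(X : Polynomial R4) ^ n - 1}) -
        Ideal.Quotient.mk (Ideal.span {(X : Polynomial R4) ^ n - 1}) (e.comp (X ^ (n - 1)))) ^ 2 =
      (1 : Polynomial R4 ⧸ Ideal.span {(X : Polynomial R4) ^ n - 1}) -
        Ideal.Quotient.mk (Ideal.span {(X : Polynomial R4) ^ n - 1}) (e.comp (X ^ (n - 1))) ∧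
    codeOfIdeal (Ideal.span
        {(1 : Polynomial R4 ⧸ Ideal.span {(X : Polynomial R4) ^ n - 1}) -
          Ideal.Quotient.mk (Ideal.span {(X : Polynomial R4) ^ n - 1}) (e.comp (X ^ (n - 1)))}) =
      dualCode (codeOfIdeal (Ideal.span
        {Ideal.Quotient.mk (Ideal.span {(X : Polynomial R4) ^ n - 1}) e})) :=
  stmt19_general n e hidem
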